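/- For L = 2 measurements given by U^{(1)} = I_d (the identity) and U^{(2)} = U, the multi-measurement coefficients reduce to the two-basis submatrix coefficients: 𝒮_k = 1 + s_k for every k = 1,…,2d−1. -/

import Mathlib

open scoped BigOperators Matrix ComplexConjugate ComplexOrder

/-- Shannon entropy of a finite real vector (natural logarithm). -/
noncomputable def shannonEntropy {n : Type*} [Fintype n] (x : n → ℝ) : ℝ :=
  -∑ i, x i * Real.log (x i)

/-- Von Neumann entropy of a Hermitian matrix, `-∑ λᵢ ln λᵢ`. -/
noncomputable def vonNeumannEntropy {d : ℕ} {ρ : Matrix (Fin d) (Fin d) ℂ}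
    (hρ : ρ.IsHermitian) : ℝ :=
  -∑ i, hρ.eigenvalues i * Real.log (hρ.eigenvalues i)

/-- The operator norm (largest singular value) of the submatrix of `U` with rows `I`
and columns `J`, expressed as the supremum of `|⟨x, U y⟩|` over unit vectors supported
on `I` resp. `J`. -/
noncomputable def subOpNorm {d : ℕ} (U : Matrix (Fin d) (Fin d) ℂ)
    (I J : Finset (Fin d)) : ℝ :=
  sSup { r : ℝ | ∃ (x : I → ℂ) (y : J → ℂ),
    (∑ i, ‖x i‖ ^ 2 = 1) ∧ (∑ j, ‖y j‖ ^ 2 = 1) ∧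
    r = ‖∑ i : I, ∑ j : J, (starRingEnd ℂ) (x i) * U i.1 j.1 * y j‖ }

/-- `sCoef U k` is the coefficient `s_k`: the maximal operator norm of a submatrix of `U`
of class `k`, i.e. with `#rows + #cols = k + 1` (for `k = 0` the set is empty and the
supremum equals `0`). -/
noncomputable def sCoef {d : ℕ} (U : Matrix (Fin d) (Fin d) ℂ) (k : ℕ) : ℝ :=
  sSup { r : ℝ | ∃ I J : Finset (Fin d), I.Nonempty ∧ J.Nonempty ∧
    I.card + J.card = k + 1 ∧ r = subOpNorm U I J }

/-- The vector `W = (s₁, s₂ - s₁, …, s_d - s_{d-1})`. -/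
noncomputable def Wvec {d : ℕ} (U : Matrix (Fin d) (Fin d) ℂ) : Fin d → ℝ :=
  fun k => sCoef U (k.val + 1) - (if k.val = 0 then 0 else sCoef U k.val)

/-- The operator norm (largest singular value) of the `d × |S|` matrix whose columns are
the columns `u_i^{(j)}` of the unitaries `U j`, for `(i, j) ∈ S`. -/
noncomputable def colOpNorm {d L : ℕ} (U : Fin L → Matrix (Fin d) (Fin d) ℂ)
    (S : Finset (Fin d × Fin L)) : ℝ :=
  sSup { r : ℝ | ∃ (x : Fin d → ℂ) (y : S → ℂ),
    (∑ a, ‖x a‖ ^ 2 = 1) ∧ (∑ s, ‖y s‖ ^ 2 = 1) ∧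
    r = ‖∑ a, ∑ s : S, (starRingEnd ℂ) (x a) * U s.1.2 a s.1.1 * y s‖ }

/-- `multiS U k` is the coefficient `𝒮_k`: the maximal squared operator norm of a
`d × (k+1)` matrix formed by `k + 1` columns taken from the concatenation of the
unitaries `U j`. -/
noncomputable def multiS {d L : ℕ} (U : Fin L → Matrix (Fin d) (Fin d) ℂ) (k : ℕ) : ℝ :=
  (sSup { r : ℝ | ∃ S : Finset (Fin d × Fin L), S.card = k + 1 ∧ r = colOpNorm U S }) ^ 2


/-! Write `V = [1 | U]`. For a unit coefficient vector on a column set `S`, the columns of `V`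
combine to `p + U q`, where `p` and `q` carry the coefficients of the two blocks; since `U` is
an isometry, `‖p + U q‖² = 1 + 2 Re ⟪p, U q⟫`. The vectors `p`, `q` live on the row set `I` and
column set `J` read off from `S`, with `|I| + |J| = |S| = k + 1`, so
`2 Re ⟪p, U q⟫ ≤ 2 ‖p‖ ‖q‖ s_k ≤ s_k`. Conversely, for unit vectors `x`, `y` supported on `I`,
`J` with `|I| + |J| = k + 1`, the choice `p = c x / √2`, `q = y / √2`, with a phase `c` making
`⟪p, U q⟫` real and nonnegative, uses the `k + 1` columns `I × {0} ∪ J × {1}` and gives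
`‖p + U q‖² = 1 + |⟪x, U y⟫|`. -/

open scoped InnerProductSpace
open WithLp (toLp)

section Vectors
variable {ι : Type*}

theorem sum_coe_sort_eq_sum_of_notMem [Fintype ι] {M : Type*} [AddCommMonoid M] (s : Finset ι)
    (f : ι → M) (hf : ∀ i ∉ s, f i = 0) : ∑ i : s, f i = ∑ i, f i :=
  (Finset.sum_coe_sort s f).trans
    (Finset.sum_subset (Finset.subset_univ s) fun i _ hi => hf i hi)

theorem card_filter_add_card_filter_eq_card [Fintype ι] [DecidableEq ι]
    (S : Finset (ι × Fin 2)) :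
    (Finset.univ.filter fun i => (i, 0) ∈ S).card
      + (Finset.univ.filter fun i => (i, 1) ∈ S).card = S.card := by
  rw [Finset.card_filter, Finset.card_filter,
    ← Fin.sum_univ_two (f := fun l => ∑ i, if (i, l) ∈ S then 1 else 0),
    ← Fintype.sum_prod_type_right', ← Finset.card_filter]
  simp

theorem extend_coe_apply_of_notMem {M : Type*} [Zero M] {s : Finset ι} (x : s → M) {i : ι}
    (hi : i ∉ s) : Function.extend (↑) x (0 : ι → M) i = 0 :=
  Function.extend_apply' _ _ _ fun ⟨j, hj⟩ => hi (hj ▸ j.2)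

theorem norm_toLp_eq_one [Fintype ι] {x : ι → ℂ} (hx : ∑ i, ‖x i‖ ^ 2 = 1) :
    ‖(toLp 2 x : EuclideanSpace ℂ ι)‖ = 1 :=
  (pow_eq_one_iff_of_nonneg (norm_nonneg _) two_ne_zero).1 (by rw [EuclideanSpace.norm_sq_eq, hx])

theorem exists_sum_norm_sq_eq_one {s : Finset ι} (hs : s.Nonempty) :
    ∃ x : s → ℂ, ∑ i, ‖x i‖ ^ 2 = 1 := by
  classical
  obtain ⟨i, hi⟩ := hs
  refine ⟨Pi.single ⟨i, hi⟩ 1, ?_⟩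
  rw [Fintype.sum_eq_single ⟨i, hi⟩ fun j hj => by simp [hj]]
  simp

noncomputable def extendZero (s : Finset ι) (x : s → ℂ) : EuclideanSpace ℂ ι :=
  toLp 2 (Function.extend (↑) x 0)

theorem extendZero_apply_coe (s : Finset ι) (x : s → ℂ) (i : s) : extendZero s x i = x i :=
  Subtype.val_injective.extend_apply x 0 i

theorem extendZero_apply_of_notMem {s : Finset ι} (x : s → ℂ) {i : ι} (hi : i ∉ s) :
    extendZero s x i = 0 :=
  extend_coe_apply_of_notMem x hi

theorem norm_extendZero [Fintype ι] {s : Finset ι} {x : s → ℂ} (hx : ∑ i, ‖x i‖ ^ 2 = 1) :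
    ‖extendZero s x‖ = 1 := by
  refine norm_toLp_eq_one ?_
  rw [← sum_coe_sort_eq_sum_of_notMem s _ fun i hi => by simp [extend_coe_apply_of_notMem x hi]]
  simpa using hx

noncomputable def block {κ : Type*} (z : ι × κ → ℂ) (l : κ) : EuclideanSpace ℂ ι :=
  toLp 2 fun i => z (i, l)

end Vectors

theorem exists_nonempty_card_add_card_eq {d k : ℕ} (hk1 : 1 ≤ k) (hk : k ≤ 2 * d - 1) :
    ∃ I J : Finset (Fin d), I.Nonempty ∧ J.Nonempty ∧ I.card + J.card = k + 1 := by
  obtain ⟨I, -, hI⟩ := (Finset.univ : Finset (Fin d)).exists_subset_card_eq (n := min k d)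
    (by simp)
  obtain ⟨J, -, hJ⟩ := (Finset.univ : Finset (Fin d)).exists_subset_card_eq
    (n := k + 1 - min k d) (by rw [Finset.card_univ, Fintype.card_fin]; omega)
  exact ⟨I, J, Finset.card_pos.1 (by omega), Finset.card_pos.1 (by omega), by omega⟩

theorem card_product_zero_union_product_one {d : ℕ} (I J : Finset (Fin d)) :
    (I ×ˢ {(0 : Fin 2)} ∪ J ×ˢ {1}).card = I.card + J.card := by
  rw [Finset.card_union_of_disjoint (Finset.disjoint_product.2 (Or.inr (by simp))),
    Finset.card_product, Finset.card_product, Finset.card_singleton, Finset.card_singleton,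
    mul_one, mul_one]

theorem subOpNorm_nonneg {d : ℕ} (U : Matrix (Fin d) (Fin d) ℂ) (I J : Finset (Fin d)) :
    0 ≤ subOpNorm U I J :=
  Real.sSup_nonneg fun _ ⟨_, _, _, _, hr⟩ => hr ▸ norm_nonneg _

theorem sCoef_nonneg {d : ℕ} (U : Matrix (Fin d) (Fin d) ℂ) (k : ℕ) : 0 ≤ sCoef U k :=
  Real.sSup_nonneg fun _ ⟨_, _, _, _, _, hr⟩ => hr ▸ subOpNorm_nonneg _ _ _

theorem colOpNorm_nonneg {d L : ℕ} (V : Fin L → Matrix (Fin d) (Fin d) ℂ)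
    (S : Finset (Fin d × Fin L)) : 0 ≤ colOpNorm V S :=
  Real.sSup_nonneg fun _ ⟨_, _, _, _, hr⟩ => hr ▸ norm_nonneg _

section Unitary
variable {d : ℕ} {U : Matrix (Fin d) (Fin d) ℂ}

local notation "𝓤" => Matrix.toEuclideanCLM (n := Fin d) (𝕜 := ℂ) U

theorem norm_add_toEuclideanCLM_sq (hU : U ∈ Matrix.unitaryGroup (Fin d) ℂ)
    (p q : EuclideanSpace ℂ (Fin d)) :
    ‖p + 𝓤 q‖ ^ 2 = ‖p‖ ^ 2 + ‖q‖ ^ 2 + 2 * RCLike.re ⟪p, 𝓤 q⟫_ℂ := by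
  rw [@norm_add_sq ℂ, ContinuousLinearMap.norm_map_of_mem_unitary (Unitary.map_mem _ hU)]
  ring

theorem sum_sum_eq_inner_toEuclideanCLM {I J : Finset (Fin d)} {p q : EuclideanSpace ℂ (Fin d)}
    (hp : ∀ i ∉ I, p i = 0) (hq : ∀ j ∉ J, q j = 0) :
    ∑ i : I, ∑ j : J, starRingEnd ℂ (p i) * U i j * q j = ⟪p, 𝓤 q⟫_ℂ := by
  have hrow (i : Fin d) : ∑ j : J, starRingEnd ℂ (p i) * U i j * q j
      = ∑ j, starRingEnd ℂ (p i) * U i j * q j :=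
    sum_coe_sort_eq_sum_of_notMem J (fun j => starRingEnd ℂ (p i) * U i j * q j)
      fun j hj => by simp [hq j hj]
  rw [Fintype.sum_congr _ _ fun i : I => hrow i,
    sum_coe_sort_eq_sum_of_notMem I (fun i => ∑ j, starRingEnd ℂ (p i) * U i j * q j)
      fun i hi => by simp [hp i hi]]
  simp only [EuclideanSpace.inner_eq_star_dotProduct, Matrix.ofLp_toEuclideanCLM, dotProduct,
    Matrix.mulVec, Finset.sum_mul]
  exact Fintype.sum_congr _ _ fun i => Fintype.sum_congr _ _ fun j => by
    rw [Pi.star_apply, Complex.star_def]; ring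

theorem sum_sum_eq_inner_extendZero {I J : Finset (Fin d)} (x : I → ℂ) (y : J → ℂ) :
    ∑ i : I, ∑ j : J, starRingEnd ℂ (x i) * U i j * y j
      = ⟪extendZero I x, 𝓤 (extendZero J y)⟫_ℂ := by
  rw [← sum_sum_eq_inner_toEuclideanCLM (fun i hi => extendZero_apply_of_notMem x hi)
    (fun j hj => extendZero_apply_of_notMem y hj)]
  simp only [extendZero_apply_coe]

theorem norm_sum_sum_le_one (hU : U ∈ Matrix.unitaryGroup (Fin d) ℂ) {I J : Finset (Fin d)}
    {x : I → ℂ} {y : J → ℂ} (hx : ∑ i, ‖x i‖ ^ 2 = 1) (hy : ∑ j, ‖y j‖ ^ 2 = 1) :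
    ‖∑ i : I, ∑ j : J, starRingEnd ℂ (x i) * U i j * y j‖ ≤ 1 := by
  rw [sum_sum_eq_inner_extendZero]
  refine (norm_inner_le_norm _ _).trans_eq ?_
  rw [ContinuousLinearMap.norm_map_of_mem_unitary (Unitary.map_mem _ hU), norm_extendZero hx,
    norm_extendZero hy, one_mul]

theorem subOpNorm_le_one (hU : U ∈ Matrix.unitaryGroup (Fin d) ℂ) (I J : Finset (Fin d)) :
    subOpNorm U I J ≤ 1 :=
  Real.sSup_le (fun _ ⟨_, _, hx, hy, hr⟩ => hr ▸ norm_sum_sum_le_one hU hx hy) zero_le_one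

theorem subOpNorm_le_sCoef (hU : U ∈ Matrix.unitaryGroup (Fin d) ℂ) {I J : Finset (Fin d)}
    (hI : I.Nonempty) (hJ : J.Nonempty) {k : ℕ} (hIJ : I.card + J.card = k + 1) :
    subOpNorm U I J ≤ sCoef U k :=
  le_csSup ⟨1, fun _ ⟨_, _, _, _, _, hr⟩ => hr ▸ subOpNorm_le_one hU _ _⟩
    ⟨I, J, hI, hJ, hIJ, rfl⟩

theorem norm_inner_le_subOpNorm (hU : U ∈ Matrix.unitaryGroup (Fin d) ℂ) {I J : Finset (Fin d)}
    {p q : EuclideanSpace ℂ (Fin d)} (hp : ∀ i ∉ I, p i = 0) (hq : ∀ j ∉ J, q j = 0)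
    (hp1 : ‖p‖ = 1) (hq1 : ‖q‖ = 1) :
    ‖⟪p, 𝓤 q⟫_ℂ‖ ≤ subOpNorm U I J := by
  have hunit {s : Finset (Fin d)} {v : EuclideanSpace ℂ (Fin d)} (hv : ∀ i ∉ s, v i = 0)
      (hv1 : ‖v‖ = 1) : ∑ i : s, ‖v i‖ ^ 2 = 1 := by
    rw [sum_coe_sort_eq_sum_of_notMem s (fun i => ‖v i‖ ^ 2) fun i hi => by simp [hv i hi],
      ← EuclideanSpace.norm_sq_eq, hv1, one_pow]
  exact le_csSup ⟨1, fun _ ⟨_, _, hx, hy, hr⟩ => hr ▸ norm_sum_sum_le_one hU hx hy⟩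
    ⟨fun i => p i, fun j => q j, hunit hp hp1, hunit hq hq1,
      by rw [sum_sum_eq_inner_toEuclideanCLM hp hq]⟩

theorem norm_inner_le_mul_subOpNorm (hU : U ∈ Matrix.unitaryGroup (Fin d) ℂ)
    {I J : Finset (Fin d)} {p q : EuclideanSpace ℂ (Fin d)} (hp : ∀ i ∉ I, p i = 0)
    (hq : ∀ j ∉ J, q j = 0) :
    ‖⟪p, 𝓤 q⟫_ℂ‖ ≤ ‖p‖ * ‖q‖ * subOpNorm U I J := by
  rcases eq_or_ne p 0 with rfl | hp0
  · simp
  rcases eq_or_ne q 0 with rfl | hq0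
  · simp
  have h := norm_inner_le_subOpNorm hU (I := I) (J := J) (p := (‖p‖⁻¹ : ℂ) • p)
    (q := (‖q‖⁻¹ : ℂ) • q) (fun i hi => by simp [hp i hi]) (fun j hj => by simp [hq j hj])
    (norm_smul_inv_norm hp0) (norm_smul_inv_norm hq0)
  rw [map_smul, inner_smul_left, inner_smul_right, norm_mul, norm_mul] at h
  simp only [map_inv₀, Complex.conj_ofReal, norm_inv, Complex.norm_real, norm_norm] at h
  rw [← div_le_iff₀' (by positivity)]
  calc ‖⟪p, 𝓤 q⟫_ℂ‖ / (‖p‖ * ‖q‖) = ‖p‖⁻¹ * (‖q‖⁻¹ * ‖⟪p, 𝓤 q⟫_ℂ‖) := by ring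
    _ ≤ subOpNorm U I J := h

theorem two_mul_re_inner_le_sCoef (hU : U ∈ Matrix.unitaryGroup (Fin d) ℂ)
    {I J : Finset (Fin d)} {k : ℕ} (hIJ : I.card + J.card = k + 1)
    {p q : EuclideanSpace ℂ (Fin d)} (hp : ∀ i ∉ I, p i = 0) (hq : ∀ j ∉ J, q j = 0)
    (hpq : ‖p‖ ^ 2 + ‖q‖ ^ 2 = 1) :
    2 * RCLike.re ⟪p, 𝓤 q⟫_ℂ ≤ sCoef U k := by
  rcases I.eq_empty_or_nonempty with rfl | hI
  · obtain rfl : p = 0 := by ext i; exact hp i (Finset.notMem_empty i)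
    simpa using sCoef_nonneg U k
  rcases J.eq_empty_or_nonempty with rfl | hJ
  · obtain rfl : q = 0 := by ext j; exact hq j (Finset.notMem_empty j)
    simpa using sCoef_nonneg U k
  calc 2 * RCLike.re ⟪p, 𝓤 q⟫_ℂ ≤ 2 * (‖p‖ * ‖q‖ * subOpNorm U I J) := by
        gcongr
        exact (RCLike.re_le_norm _).trans (norm_inner_le_mul_subOpNorm hU hp hq)
    _ ≤ (‖p‖ ^ 2 + ‖q‖ ^ 2) * sCoef U k := by
        nlinarith [two_mul_le_add_sq ‖p‖ ‖q‖, subOpNorm_nonneg U I J,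
          subOpNorm_le_sCoef hU hI hJ hIJ, mul_nonneg (norm_nonneg p) (norm_nonneg q)]
    _ = sCoef U k := by rw [hpq, one_mul]

theorem sum_norm_sq_eq_block {S : Finset (Fin d × Fin 2)} {z : Fin d × Fin 2 → ℂ}
    (hz : ∀ s ∉ S, z s = 0) :
    ∑ s : S, ‖z s‖ ^ 2 = ‖block z 0‖ ^ 2 + ‖block z 1‖ ^ 2 := by
  rw [sum_coe_sort_eq_sum_of_notMem S (fun s => ‖z s‖ ^ 2) fun s hs => by simp [hz s hs],
    Fintype.sum_prod_type_right, Fin.sum_univ_two, EuclideanSpace.norm_sq_eq,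
    EuclideanSpace.norm_sq_eq]
  rfl

theorem sum_sum_cols_eq_inner_block {S : Finset (Fin d × Fin 2)} {z : Fin d × Fin 2 → ℂ}
    (hz : ∀ s ∉ S, z s = 0) (x : Fin d → ℂ) :
    ∑ a, ∑ s : S, starRingEnd ℂ (x a) * ![(1 : Matrix (Fin d) (Fin d) ℂ), U] s.1.2 a s.1.1 * z s
      = ⟪toLp 2 x, block z 0 + 𝓤 (block z 1)⟫_ℂ := by
  have hrow (a : Fin d) : ∑ s : S,
      starRingEnd ℂ (x a) * ![(1 : Matrix (Fin d) (Fin d) ℂ), U] s.1.2 a s.1.1 * z s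
      = starRingEnd ℂ (x a) * (z (a, 0) + ∑ j, U a j * z (j, 1)) := by
    rw [sum_coe_sort_eq_sum_of_notMem S
      (fun s => starRingEnd ℂ (x a) * ![(1 : Matrix (Fin d) (Fin d) ℂ), U] s.2 a s.1 * z s)
      fun s hs => by simp [hz s hs], Fintype.sum_prod_type_right, Fin.sum_univ_two]
    simp [Matrix.one_apply, Finset.mul_sum, mul_add, mul_assoc]
  rw [Fintype.sum_congr _ _ hrow, EuclideanSpace.inner_eq_star_dotProduct, dotProduct]
  refine Fintype.sum_congr _ _ fun a => ?_
  simp [block, Matrix.mulVec, dotProduct, mul_comm]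

theorem norm_block_add_sq_le (hU : U ∈ Matrix.unitaryGroup (Fin d) ℂ)
    {S : Finset (Fin d × Fin 2)} {k : ℕ} (hS : S.card = k + 1) {z : Fin d × Fin 2 → ℂ}
    (hz : ∀ s ∉ S, z s = 0) (hz1 : ‖block z 0‖ ^ 2 + ‖block z 1‖ ^ 2 = 1) :
    ‖block z 0 + 𝓤 (block z 1)‖ ^ 2 ≤ 1 + sCoef U k := by
  rw [norm_add_toEuclideanCLM_sq hU, hz1, add_le_add_iff_left]
  exact two_mul_re_inner_le_sCoef hU (by rw [card_filter_add_card_filter_eq_card, hS])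
    (fun i hi => hz _ (by simpa using hi)) (fun j hj => hz _ (by simpa using hj)) hz1

theorem norm_sum_sum_cols_le (hU : U ∈ Matrix.unitaryGroup (Fin d) ℂ)
    {S : Finset (Fin d × Fin 2)} {k : ℕ} (hS : S.card = k + 1) {x : Fin d → ℂ} {y : S → ℂ}
    (hx : ∑ a, ‖x a‖ ^ 2 = 1) (hy : ∑ s, ‖y s‖ ^ 2 = 1) :
    ‖∑ a, ∑ s : S, starRingEnd ℂ (x a) * ![(1 : Matrix (Fin d) (Fin d) ℂ), U] s.1.2 a s.1.1 * y s‖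
      ≤ √(1 + sCoef U k) := by
  set z : Fin d × Fin 2 → ℂ := Function.extend (↑) y 0
  have hz (s) (hs : s ∉ S) : z s = 0 := extend_coe_apply_of_notMem y hs
  have hyz : y = fun s : S => z s :=
    funext fun s => (Subtype.val_injective.extend_apply y 0 s).symm
  rw [hyz, sum_norm_sq_eq_block hz] at hy
  rw [hyz, sum_sum_cols_eq_inner_block hz]
  refine (norm_inner_le_norm _ _).trans ?_
  rw [norm_toLp_eq_one hx, one_mul]
  exact Real.le_sqrt_of_sq_le (norm_block_add_sq_le hU hS hz hy)

theorem colOpNorm_le (hU : U ∈ Matrix.unitaryGroup (Fin d) ℂ) {S : Finset (Fin d × Fin 2)}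
    {k : ℕ} (hS : S.card = k + 1) :
    colOpNorm ![(1 : Matrix (Fin d) (Fin d) ℂ), U] S ≤ √(1 + sCoef U k) :=
  Real.sSup_le (fun _ ⟨_, _, hx, hy, hr⟩ => hr ▸ norm_sum_sum_cols_le hU hS hx hy)
    (Real.sqrt_nonneg _)

theorem norm_block_add_le_colOpNorm (hU : U ∈ Matrix.unitaryGroup (Fin d) ℂ)
    {S : Finset (Fin d × Fin 2)} {k : ℕ} (hS : S.card = k + 1) {z : Fin d × Fin 2 → ℂ}
    (hz : ∀ s ∉ S, z s = 0) (hz1 : ‖block z 0‖ ^ 2 + ‖block z 1‖ ^ 2 = 1) :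
    ‖block z 0 + 𝓤 (block z 1)‖ ≤ colOpNorm ![(1 : Matrix (Fin d) (Fin d) ℂ), U] S := by
  set w := block z 0 + 𝓤 (block z 1)
  rcases eq_or_ne w 0 with hw | hw
  · rw [hw, norm_zero]
    exact colOpNorm_nonneg _ _
  refine le_csSup ⟨_, fun _ ⟨_, _, hx, hy, hr⟩ => hr ▸ norm_sum_sum_cols_le hU hS hx hy⟩
    ⟨((‖w‖⁻¹ : ℂ) • w).ofLp, fun s => z s, ?_, ?_, ?_⟩
  · rw [← EuclideanSpace.norm_sq_eq, norm_smul, norm_inv, Complex.norm_real, norm_norm,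
      inv_mul_cancel₀ (norm_ne_zero_iff.2 hw), one_pow]
  · rw [sum_norm_sq_eq_block hz, hz1]
  · rw [sum_sum_cols_eq_inner_block hz, WithLp.toLp_ofLp, inner_smul_left,
      inner_self_eq_norm_sq_to_K]
    simp [sq, norm_ne_zero_iff.2 hw]

theorem one_add_norm_sum_sum_le_colOpNorm_sq (hU : U ∈ Matrix.unitaryGroup (Fin d) ℂ)
    {I J : Finset (Fin d)} {k : ℕ} (hIJ : I.card + J.card = k + 1) {x : I → ℂ} {y : J → ℂ}
    (hx : ∑ i, ‖x i‖ ^ 2 = 1) (hy : ∑ j, ‖y j‖ ^ 2 = 1) :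
    1 + ‖∑ i : I, ∑ j : J, starRingEnd ℂ (x i) * U i j * y j‖
      ≤ colOpNorm ![(1 : Matrix (Fin d) (Fin d) ℂ), U] (I ×ˢ {0} ∪ J ×ˢ {1}) ^ 2 := by
  set p := extendZero I x
  set q := extendZero J y
  rw [sum_sum_eq_inner_extendZero]
  obtain ⟨c, hc1, hc⟩ := RCLike.exists_norm_eq_mul_self ⟪p, 𝓤 q⟫_ℂ
  set a : ℂ := (((√2)⁻¹ : ℝ) : ℂ)
  have ha : a * a = 1 / 2 := by
    rw [← Complex.ofReal_mul, ← mul_inv, Real.mul_self_sqrt zero_le_two]; norm_num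
  set z : Fin d × Fin 2 → ℂ := fun s => ![(a * starRingEnd ℂ c) • p, a • q] s.2 s.1
  have hz (s) (hs : s ∉ I ×ˢ {(0 : Fin 2)} ∪ J ×ˢ {1}) : z s = 0 := by
    obtain ⟨i, l⟩ := s
    fin_cases l
    · simp [z, p, extendZero_apply_of_notMem x (by simpa using hs : i ∉ I)]
    · simp [z, q, extendZero_apply_of_notMem y (by simpa using hs : i ∉ J)]
  have hz0 : block z 0 = (a * starRingEnd ℂ c) • p := rfl
  have hz1 : block z 1 = a • q := rfl
  have hnorm : ‖block z 0‖ ^ 2 + ‖block z 1‖ ^ 2 = 1 := by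
    have ha2 : ‖a‖ ^ 2 = 1 / 2 := by
      rw [Complex.norm_real, Real.norm_eq_abs, sq_abs, inv_pow, Real.sq_sqrt zero_le_two,
        one_div]
    rw [hz0, hz1, norm_smul, norm_smul, norm_mul, RCLike.norm_conj, hc1, norm_extendZero hx,
      norm_extendZero hy]
    linear_combination 2 * ha2
  have hre : 2 * RCLike.re ⟪block z 0, 𝓤 (block z 1)⟫_ℂ = ‖⟪p, 𝓤 q⟫_ℂ‖ := by
    have hac : starRingEnd ℂ (a * starRingEnd ℂ c) = a * c := by
      rw [map_mul (starRingEnd ℂ), Complex.conj_ofReal, Complex.conj_conj]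
    rw [hz0, hz1, map_smul, inner_smul_left, inner_smul_right, hac]
    calc 2 * RCLike.re (a * c * (a * ⟪p, 𝓤 q⟫_ℂ))
        = 2 * RCLike.re ((a * a) * (c * ⟪p, 𝓤 q⟫_ℂ)) := by ring_nf
      _ = ‖⟪p, 𝓤 q⟫_ℂ‖ := by rw [← hc, ha]; simp
  have hS : (I ×ˢ {(0 : Fin 2)} ∪ J ×ˢ {1}).card = k + 1 := by
    rw [card_product_zero_union_product_one, hIJ]
  calc 1 + ‖⟪p, 𝓤 q⟫_ℂ‖ = ‖block z 0 + 𝓤 (block z 1)‖ ^ 2 := by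
        rw [norm_add_toEuclideanCLM_sq hU, hnorm, hre]
    _ ≤ _ := pow_le_pow_left₀ (norm_nonneg _) (norm_block_add_le_colOpNorm hU hS hz hnorm) 2

end Unitary

section Coefficients
variable {d : ℕ} {U : Matrix (Fin d) (Fin d) ℂ}

theorem multiS_le (hU : U ∈ Matrix.unitaryGroup (Fin d) ℂ) (k : ℕ) :
    multiS ![(1 : Matrix (Fin d) (Fin d) ℂ), U] k ≤ 1 + sCoef U k := by
  rw [multiS, ← Real.sq_sqrt (by linarith [sCoef_nonneg U k] : 0 ≤ 1 + sCoef U k)]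
  refine pow_le_pow_left₀ (Real.sSup_nonneg ?_) (Real.sSup_le ?_ (Real.sqrt_nonneg _)) 2
  · rintro _ ⟨S, -, rfl⟩
    exact colOpNorm_nonneg _ _
  · rintro _ ⟨S, hS, rfl⟩
    exact colOpNorm_le hU hS

theorem one_add_subOpNorm_le_multiS (hU : U ∈ Matrix.unitaryGroup (Fin d) ℂ)
    {I J : Finset (Fin d)} (hI : I.Nonempty) (hJ : J.Nonempty) {k : ℕ}
    (hIJ : I.card + J.card = k + 1) :
    1 + subOpNorm U I J ≤ multiS ![(1 : Matrix (Fin d) (Fin d) ℂ), U] k := by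
  have hbdd : BddAbove {r | ∃ S : Finset (Fin d × Fin 2), S.card = k + 1 ∧
      r = colOpNorm ![(1 : Matrix (Fin d) (Fin d) ℂ), U] S} := by
    refine ⟨√(1 + sCoef U k), ?_⟩
    rintro _ ⟨S, hS, rfl⟩
    exact colOpNorm_le hU hS
  obtain ⟨x₀, hx₀⟩ := exists_sum_norm_sq_eq_one hI
  obtain ⟨y₀, hy₀⟩ := exists_sum_norm_sq_eq_one hJ
  rw [add_comm, ← le_sub_iff_add_le]
  refine csSup_le ⟨_, x₀, y₀, hx₀, hy₀, rfl⟩ ?_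
  rintro _ ⟨x, y, hx, hy, rfl⟩
  rw [le_sub_iff_add_le, add_comm, multiS]
  refine (one_add_norm_sum_sum_le_colOpNorm_sq hU hIJ hx hy).trans
    (pow_le_pow_left₀ (colOpNorm_nonneg _ _) (le_csSup hbdd ⟨_, ?_, rfl⟩) 2)
  rw [card_product_zero_union_product_one, hIJ]

theorem one_add_sCoef_le_multiS (hU : U ∈ Matrix.unitaryGroup (Fin d) ℂ) {k : ℕ} (hk1 : 1 ≤ k)
    (hk : k ≤ 2 * d - 1) :
    1 + sCoef U k ≤ multiS ![(1 : Matrix (Fin d) (Fin d) ℂ), U] k := by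
  obtain ⟨I₀, J₀, hI₀, hJ₀, hIJ₀⟩ := exists_nonempty_card_add_card_eq hk1 hk
  rw [add_comm, ← le_sub_iff_add_le]
  refine csSup_le ⟨_, I₀, J₀, hI₀, hJ₀, hIJ₀, rfl⟩ ?_
  rintro _ ⟨I, J, hI, hJ, hIJ, rfl⟩
  rw [le_sub_iff_add_le, add_comm]
  exact one_add_subOpNorm_le_multiS hU hI hJ hIJ

end Coefficients

theorem stmt_15_general (d : ℕ)
    (U : Matrix (Fin d) (Fin d) ℂ) (hU : U ∈ Matrix.unitaryGroup (Fin d) ℂ)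
    (k : ℕ) (hk1 : 1 ≤ k) (hk : k ≤ 2 * d - 1) :
    multiS ![(1 : Matrix (Fin d) (Fin d) ℂ), U] k = 1 + sCoef U k :=
  (multiS_le hU k).antisymm (one_add_sCoef_le_multiS hU hk1 hk)

/-- For `L = 2` measurements given by `U⁽¹⁾ = 1` (the identity) and `U⁽²⁾ = U`, the
multi-measurement coefficients reduce to the two-basis submatrix coefficients:
`𝒮_k = 1 + s_k` for every `k = 1, …, 2d - 1`. -/
theorem stmt_15 (d : ℕ) (hd : 2 ≤ d)
    (U : Matrix (Fin d) (Fin d) ℂ) (hU : U ∈ Matrix.unitaryGroup (Fin d) ℂ)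
    (k : ℕ) (hk1 : 1 ≤ k) (hk : k ≤ 2 * d - 1) :
    multiS ![(1 : Matrix (Fin d) (Fin d) ℂ), U] k = 1 + sCoef U k :=
  stmt_15_general d U hU k hk1 hk
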